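/- arXiv:0901.3984 — 4 statements merged into one kernel-verified Lean document; each statement's English description precedes it below -/
import Mathlib

section
/- If a set Σ of TGDs and EGDs is safely restricted, then Σ is inductively restricted. -/
set_option maxHeartbeats 1000000

namespace StopChase

/-! ## Basic objects: values, terms, relation symbols, atoms, facts -/

/-- Database values: constants from `Δ` and labeled nulls from `Δ_null`. -/
inductive Val : Type
  | const : ℕ → Val
  | null : ℕ → Val
  deriving DecidableEq

/-- `v` is a labeled null. -/
def Val.isNull : Val → Prop
  | .null _ => True
  | .const _ => False

/-- Terms: variables or constant parameters. -/
inductive Term : Type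
  | var : ℕ → Term
  | const : ℕ → Term
  deriving DecidableEq

/-- Relation symbols of a universal schema: a name together with an arity. -/
abbrev RelSym : Type := ℕ × ℕ

/-- The arity of a relation symbol. -/
def RelSym.arity (R : RelSym) : ℕ := R.2

/-- A position `R^i` of a relation symbol. -/
abbrev Pos : Type := RelSym × ℕ

/-- An atom: a relation symbol applied to a list of terms. -/
structure Atom : Type where
  rel : RelSym
  args : List Term
  deriving DecidableEq

/-- Well-formedness of an atom: the number of arguments matches the arity. -/
def Atom.wf (A : Atom) : Prop := A.args.length = A.rel.arity

/-- A fact: a relation symbol applied to a list of values. -/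
structure Fact : Type where
  rel : RelSym
  args : List Val
  deriving DecidableEq

/-- Well-formedness of a fact. -/
def Fact.wf (F : Fact) : Prop := F.args.length = F.rel.arity

/-- The variables occurring in an atom. -/
def Atom.vars (A : Atom) : Set ℕ := {v | Term.var v ∈ A.args}

/-- The variables occurring in a list of atoms. -/
def varsOf (L : List Atom) : Set ℕ := {v | ∃ A ∈ L, v ∈ A.vars}

/-- Variable `v` occurs at position `π` in the list of atoms `L`. -/
def occursAt (L : List Atom) (v : ℕ) (π : Pos) : Prop :=
  ∃ A ∈ L, A.rel = π.1 ∧ A.args[π.2]? = some (Term.var v)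

/-- The set of positions of a list of atoms. -/
def posOfAtoms (L : List Atom) : Set Pos :=
  {π | ∃ A ∈ L, A.rel = π.1 ∧ π.2 < A.args.length}

/-! ## Constraints: TGDs and EGDs -/

/-- A tuple generating dependency `∀ x̄ (φ(x̄) → ∃ ȳ ψ(x̄,ȳ))`, given by its body `φ`
and head `ψ`.  The universally quantified variables are those occurring in the body;
head variables not occurring in the body are (implicitly) existentially quantified. -/
structure TGD : Type where
  body : List Atom
  head : List Atom
  deriving DecidableEq

/-- Well-formedness of a TGD: the head is nonempty and all atoms are well-formed. -/
def TGD.wf (t : TGD) : Prop :=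
  t.head ≠ [] ∧ (∀ A ∈ t.body, A.wf) ∧ (∀ A ∈ t.head, A.wf)

/-- The universally quantified variables of a TGD. -/
def TGD.uniVars (t : TGD) : Set ℕ := varsOf t.body

/-- The existentially quantified variables of a TGD. -/
def TGD.exVars (t : TGD) : Set ℕ := varsOf t.head \ varsOf t.body

/-- An equality generating dependency `∀ x̄ (φ(x̄) → x_i = x_j)`. -/
structure EGD : Type where
  body : List Atom
  lhs : ℕ
  rhs : ℕ
  deriving DecidableEq

/-- Well-formedness of an EGD: nonempty well-formed body and both equated
variables occur in the body. -/
def EGD.wf (e : EGD) : Prop :=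
  e.body ≠ [] ∧ (∀ A ∈ e.body, A.wf) ∧ e.lhs ∈ varsOf e.body ∧ e.rhs ∈ varsOf e.body

/-- A constraint is a TGD or an EGD. -/
inductive Constraint : Type
  | tgd : TGD → Constraint
  | egd : EGD → Constraint
  deriving DecidableEq

/-- Well-formedness of a constraint. -/
def Constraint.wf : Constraint → Prop
  | .tgd t => t.wf
  | .egd e => e.wf

/-- The body atoms of a constraint. -/
def Constraint.bodyAtoms : Constraint → List Atom
  | .tgd t => t.body
  | .egd e => e.body

/-- `pos(α)`: the set of positions occurring in the body of `α`. -/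
def Constraint.pos (α : Constraint) : Set Pos := posOfAtoms α.bodyAtoms

/-- `pos(Σ)`: the set of positions occurring in the bodies of constraints of `Σ`. -/
def posOf (S : Set Constraint) : Set Pos := ⋃ α ∈ S, α.pos

/-- The universally quantified variables occurring in the head of a constraint
(for an EGD, the two equated variables). -/
def Constraint.headUniVars : Constraint → Set ℕ
  | .tgd t => varsOf t.head ∩ varsOf t.body
  | .egd e => {e.lhs, e.rhs}

/-! ## Semantics -/

/-- Evaluation of a term under an assignment `ν : V → Δ ∪ Δ_null`. -/
def Term.eval (ν : ℕ → Val) : Term → Val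
  | .var v => ν v
  | .const c => Val.const c

/-- Instantiation of an atom to a fact. -/
def Atom.inst (ν : ℕ → Val) (A : Atom) : Fact := ⟨A.rel, A.args.map (Term.eval ν)⟩

/-- All atoms of `L`, instantiated by `ν`, hold in the instance `I`. -/
def bodyHolds (I : Set Fact) (L : List Atom) (ν : ℕ → Val) : Prop :=
  ∀ A ∈ L, A.inst ν ∈ I

/-- `I ⊨ α(ā)`: the constraint `α` holds in `I` under the assignment `ν` of its
universally quantified variables. -/
def Constraint.satAt : Constraint → Set Fact → (ℕ → Val) → Prop
  | .tgd t, I, ν => bodyHolds I t.body ν →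
      ∃ ν' : ℕ → Val, (∀ v ∈ varsOf t.body, ν' v = ν v) ∧ bodyHolds I t.head ν'
  | .egd e, I, ν => bodyHolds I e.body ν → ν e.lhs = ν e.rhs

/-- `I ⊨ α`. -/
def Constraint.holds (α : Constraint) (I : Set Fact) : Prop := ∀ ν, α.satAt I ν

/-- The active domain of an instance: the set of values occurring in it. -/
def adom (I : Set Fact) : Set Val := {v | ∃ F ∈ I, v ∈ F.args}

/-- Substitution of the value `a` by the value `b`. -/
def Val.subst (a b : Val) (v : Val) : Val := if v = a then b else v

/-- Substitution applied to a fact. -/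
def Fact.substF (a b : Val) (F : Fact) : Fact := ⟨F.rel, F.args.map (Val.subst a b)⟩

/-! ## Chase steps and chase sequences -/

/-- A chase step `I →_{α,ā} J`: the instance `I` violates `α(ā)` and `J` is
obtained from `I` by adding the head atoms instantiated with fresh labeled nulls
for the existentially quantified variables (TGDs), resp. by equating a labeled
null with another value (EGDs). -/
def Constraint.chaseStep (α : Constraint) (ν : ℕ → Val) (I J : Set Fact) : Prop :=
  ¬ α.satAt I ν ∧
  match α with
  | .tgd t =>
      ∃ ν' : ℕ → Val,
        (∀ v ∈ varsOf t.body, ν' v = ν v) ∧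
        (∀ v ∈ t.exVars, (ν' v).isNull ∧ ν' v ∉ adom I) ∧
        (∀ v ∈ t.exVars, ∀ w ∈ t.exVars, ν' v = ν' w → v = w) ∧
        J = I ∪ {F | ∃ A ∈ t.head, F = A.inst ν'}
  | .egd e =>
      ∃ a b : Val, a.isNull ∧ ({a, b} : Set Val) = {ν e.lhs, ν e.rhs} ∧
        J = Fact.substF a b '' I

/-- The data of a (finite or infinite) chase sequence: the instances, and
the constraint and assignment used at each step. -/
structure ChaseData : Type where
  inst : ℕ → Set Fact
  cns : ℕ → Constraint
  asg : ℕ → ℕ → Val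

/-- `D` is a chase sequence of length (at least) `r` with constraints from `S`. -/
def ChaseData.okUpTo (D : ChaseData) (S : Set Constraint) (r : ℕ) : Prop :=
  ∀ i < r, D.cns i ∈ S ∧ (D.cns i).chaseStep (D.asg i) (D.inst i) (D.inst (i+1))

/-- `D` is an infinite chase sequence with constraints from `S`. -/
def ChaseData.okAll (D : ChaseData) (S : Set Constraint) : Prop :=
  ∀ i, D.cns i ∈ S ∧ (D.cns i).chaseStep (D.asg i) (D.inst i) (D.inst (i+1))

/-- The nulls freshly introduced in the first `r` steps are globally fresh,
i.e. do not occur in any earlier instance of the sequence. -/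
def ChaseData.fresh (D : ChaseData) (r : ℕ) : Prop :=
  ∀ i < r, ∀ v, v.isNull → v ∈ adom (D.inst (i+1)) → v ∉ adom (D.inst i) →
    ∀ j ≤ i, v ∉ adom (D.inst j)

/-- Global freshness for an infinite sequence. -/
def ChaseData.freshAll (D : ChaseData) : Prop := ∀ r, D.fresh r

/-- The chase with `S` terminates on the instance `I`: there is no infinite
chase sequence starting from `I`. -/
def chaseTerminates (S : Set Constraint) (I : Set Fact) : Prop :=
  ¬ ∃ D : ChaseData, D.inst 0 = I ∧ D.okAll S

/-- `J` is a result of the chase of `I` with `S`: it is the final instance of a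
finite chase sequence starting from `I` and satisfies all constraints of `S`. -/
def ChaseResult (S : Set Constraint) (I J : Set Fact) : Prop :=
  ∃ (D : ChaseData) (r : ℕ), D.inst 0 = I ∧ D.okUpTo S r ∧ D.inst r = J ∧
    ∀ α ∈ S, α.holds J

/-- `α` is `(I,S)`-irrelevant: no chase sequence starting from `I` with `S`
contains a chase step applying `α`. -/
def Irrelevant (I : Set Fact) (S : Set Constraint) (α : Constraint) : Prop :=
  ¬ ∃ (D : ChaseData) (r : ℕ), D.inst 0 = I ∧ D.okUpTo S r ∧ ∃ i < r, D.cns i = α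

/-! ## Affected positions, propagation graph and safety -/

/-- The affected positions `aff(S)` of (the TGDs of) a constraint set `S`. -/
inductive Affected (S : Set Constraint) : Pos → Prop
  | ex (t : TGD) (y : ℕ) (π : Pos) :
      Constraint.tgd t ∈ S → y ∈ t.exVars → occursAt t.head y π → Affected S π
  | uni (t : TGD) (x : ℕ) (π : Pos) :
      Constraint.tgd t ∈ S → x ∈ t.uniVars → occursAt t.head x π →
      (∃ π', occursAt t.body x π') →
      (∀ π', occursAt t.body x π' → Affected S π') → Affected S π

/-- A (non-special) edge `π1 → π2` of the propagation graph `prop(S)`. -/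
def propEdge (S : Set Constraint) (π1 π2 : Pos) : Prop :=
  ∃ t, Constraint.tgd t ∈ S ∧ ∃ x ∈ t.uniVars, x ∈ varsOf t.head ∧
    occursAt t.body x π1 ∧ (∀ π, occursAt t.body x π → Affected S π) ∧
    occursAt t.head x π2

/-- A special edge `π1 →* π2` of the propagation graph `prop(S)`. -/
def propSpecialEdge (S : Set Constraint) (π1 π2 : Pos) : Prop :=
  ∃ t, Constraint.tgd t ∈ S ∧ ∃ x ∈ t.uniVars, x ∈ varsOf t.head ∧
    occursAt t.body x π1 ∧ (∀ π, occursAt t.body x π → Affected S π) ∧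
    ∃ y ∈ t.exVars, occursAt t.head y π2

/-- Any edge of the propagation graph. -/
def propAnyEdge (S : Set Constraint) (π1 π2 : Pos) : Prop :=
  propEdge S π1 π2 ∨ propSpecialEdge S π1 π2

/-- `S` is safe: the propagation graph `prop(S)` has no cycle going through a
special edge. -/
def IsSafe (S : Set Constraint) : Prop :=
  ¬ ∃ π1 π2, propSpecialEdge S π1 π2 ∧ Relation.ReflTransGen (propAnyEdge S) π2 π1

/-! ## Restriction systems -/

/-- The fact `F` has a labeled null at position `π`. -/
def Fact.nullAt (F : Fact) (π : Pos) : Prop :=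
  F.rel = π.1 ∧ ∃ v, F.args[π.2]? = some v ∧ v.isNull

/-- The instance `I` contains labeled nulls only in positions from `P`. -/
def nullsOnlyIn (I : Set Fact) (P : Set Pos) : Prop :=
  ∀ F ∈ I, ∀ π : Pos, F.nullAt π → π ∈ P

/-- `α ≺_P β`. -/
def prec (P : Set Pos) (α β : Constraint) : Prop :=
  ∃ (I J : Set Fact) (a b : ℕ → Val),
    I.Finite ∧ nullsOnlyIn I P ∧
    ¬ α.satAt I a ∧ β.satAt I b ∧
    α.chaseStep a I J ∧ ¬ β.satAt J b ∧
    ∃ v ∈ β.headUniVars, (b v).isNull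

/-- `aff-cl(t,P)` for a TGD `t` and a set of positions `P`. -/
def affCl (t : TGD) (P : Set Pos) : Set Pos :=
  {π | π ∈ posOfAtoms t.head ∧
    ((∀ x ∈ t.uniVars, occursAt t.head x π → ∀ π', occursAt t.body x π' → π' ∈ P) ∨
     (∃ y ∈ t.exVars, occursAt t.head y π))}

/-- A restriction system: a directed graph on constraints together with a
position-set labelling. -/
structure RestrSys : Type where
  E : Constraint → Constraint → Prop
  f : Constraint → Set Pos

/-- The defining closure conditions of a restriction system for `S`. -/
def RestrSys.valid (S : Set Constraint) (R : RestrSys) : Prop :=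
  (∀ t : TGD, ∀ β, Constraint.tgd t ∈ S → β ∈ S → R.E (.tgd t) β →
      affCl t (R.f (.tgd t)) ∩ β.pos ⊆ R.f β) ∧
  (∀ e : EGD, ∀ β, Constraint.egd e ∈ S → β ∈ S → R.E (.egd e) β →
      R.f (.egd e) ∩ β.pos ⊆ R.f β) ∧
  (∀ α β, α ∈ S → β ∈ S → prec (R.f α) α β → R.E α β)

/-- Pointwise inclusion of restriction systems. -/
def RestrSys.le (R1 R2 : RestrSys) : Prop :=
  (∀ a b, R1.E a b → R2.E a b) ∧ (∀ a, R1.f a ⊆ R2.f a)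

/-- The minimal restriction system of `S` (obtained from the empty system by
repeatedly enforcing the closure conditions, extending only as required). -/
def IsMinimalRS (S : Set Constraint) (R : RestrSys) : Prop :=
  R.valid S ∧ ∀ R', R'.valid S → R.le R'

/-- The edge relation of a restriction system, restricted to `S`. -/
def edgeOn (S : Set Constraint) (E : Constraint → Constraint → Prop)
    (a b : Constraint) : Prop :=
  a ∈ S ∧ b ∈ S ∧ E a b

/-- The strongly connected component of `α`. -/
def sccOf (S : Set Constraint) (E : Constraint → Constraint → Prop)
    (α : Constraint) : Set Constraint :=
  {β | β ∈ S ∧ Relation.ReflTransGen (edgeOn S E) α β ∧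
    Relation.ReflTransGen (edgeOn S E) β α}

/-- The (nontrivial) strongly connected components of the graph `(S,E)`,
i.e. those containing a cycle. -/
def SCCs (S : Set Constraint) (E : Constraint → Constraint → Prop) :
    Set (Set Constraint) :=
  {C | ∃ α ∈ S, Relation.TransGen (edgeOn S E) α α ∧ C = sccOf S E α}

/-- `PartMem S S'` holds iff `S' ∈ part(S)`, where `part` is the recursive
algorithm computing strongly connected components of minimal restriction
systems. -/
inductive PartMem : Set Constraint → Set Constraint → Prop
  | base (S : Set Constraint) (R : RestrSys) :
      IsMinimalRS S R → SCCs S R.E = {S} → PartMem S S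
  | step (S : Set Constraint) (R : RestrSys) (C S' : Set Constraint) :
      IsMinimalRS S R → SCCs S R.E ≠ {S} → C ∈ SCCs S R.E →
      PartMem C S' → PartMem S S'

/-- `S` is inductively restricted: every `S' ∈ part(S)` is safe. -/
def InductivelyRestricted (S : Set Constraint) : Prop :=
  ∀ S', PartMem S S' → IsSafe S'

/-- `S` is safely restricted: every strongly connected component of its
minimal restriction system is safe. -/
def SafelyRestricted (S : Set Constraint) : Prop :=
  ∀ R, IsMinimalRS S R → ∀ C ∈ SCCs S R.E, IsSafe C

/-! ## Monitor graphs -/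

/-- A node of a monitor graph: a value together with a set of positions. -/
abbrev MNode : Type := Val × Set Pos

/-- A labeled edge of a monitor graph. -/
structure MEdge : Type where
  src : MNode
  cns : Constraint
  lbl : Set Pos
  tgt : MNode

/-- The labeled nulls newly introduced by a chase step from `I` to `J`. -/
def newNulls (I J : Set Fact) : Set Val := {v | v.isNull ∧ v ∈ adom J ∧ v ∉ adom I}

/-- The set of positions at which the value `v` occurs in the instance `I`. -/
def posOfVal (I : Set Fact) (v : Val) : Set Pos :=
  {π | ∃ F ∈ I, F.rel = π.1 ∧ F.args[π.2]? = some v}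

/-- The set of positions of the instantiated body `body(α(ā))` in which the
value `v` occurs. -/
def instBodyPos (α : Constraint) (ν : ℕ → Val) (v : Val) : Set Pos :=
  {π | ∃ A ∈ α.bodyAtoms, A.rel = π.1 ∧ (A.args.map (Term.eval ν))[π.2]? = some v}

/-- The monitor-graph nodes created by the `i`-th chase step. -/
def ChaseData.mgNew (D : ChaseData) (i : ℕ) : Set MNode :=
  {p | ∃ n ∈ newNulls (D.inst i) (D.inst (i+1)), p = (n, posOfVal (D.inst (i+1)) n)}

/-- The nodes of the monitor graph of the length-`i` prefix of `D`. -/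
def ChaseData.mgV (D : ChaseData) : ℕ → Set MNode
  | 0 => ∅
  | i+1 => D.mgV i ∪ D.mgNew i

/-- The edges of the monitor graph of the length-`i` prefix of `D`. -/
def ChaseData.mgE (D : ChaseData) : ℕ → Set MEdge
  | 0 => ∅
  | i+1 => D.mgE i ∪
      {e | e.src ∈ D.mgV i ∧ e.tgt ∈ D.mgNew i ∧ e.cns = D.cns i ∧
           e.lbl = instBodyPos (D.cns i) (D.asg i) e.src.1}

/-- A path in a monitor graph: a list of edges of the graph in which consecutive
edges are chained (`p_{5,6}(e_i) = p_{1,2}(e_{i+1})`). -/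
def IsPath (E : Set MEdge) (l : List MEdge) : Prop :=
  (∀ e ∈ l, e ∈ E) ∧ l.Chain' (fun a b => a.tgt = b.src)

/-- The projection `p_{2,3,4,6}` of an edge. -/
def MEdge.sig (e : MEdge) : Set Pos × Constraint × Set Pos × Set Pos :=
  (e.src.2, e.cns, e.lbl, e.tgt.2)

/-- A monitor graph with edge set `E` is `k`-cyclic: some path contains `k`
pairwise distinct edges, in order, that agree on the projection `p_{2,3,4,6}`. -/
def kCyclic (E : Set MEdge) (k : ℕ) : Prop :=
  ∃ l es : List MEdge, IsPath E l ∧ es.Sublist l ∧ es.length = k ∧ es.Nodup ∧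
    es.Chain' (fun a b => a.sig = b.sig)

/-- `DepthLe E v d`: the depth of the node `v` in the monitor graph with edge
set `E` is at most `d` (depth `0` for nodes without predecessors, and `1` plus
the maximal depth of the predecessors otherwise). -/
inductive DepthLe (E : Set MEdge) : MNode → ℕ → Prop
  | intro (v : MNode) (d : ℕ) (f : MEdge → ℕ) :
      (∀ e ∈ E, e.tgt = v → f e < d) →
      (∀ e, e ∈ E → e.tgt = v → DepthLe E e.src (f e)) → DepthLe E v d

/-- The node `v` has depth exactly `d`. -/
def HasDepth (E : Set MEdge) (v : MNode) (d : ℕ) : Prop :=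
  DepthLe E v d ∧ ∀ d' < d, ¬ DepthLe E v d'


/-! Every member of `part(Σ)` lies inside a strongly connected component of the minimal
restriction system of `Σ`: either `Σ` is its own only component, or the member comes out of the
recursion on a component `C`, and everything `part(C)` returns is a subset of `C`. Safety passes
to subsets, since enlarging the constraint set only adds affected positions and edges to the
propagation graph. -/

theorem Affected.mono {S T : Set Constraint} (h : S ⊆ T) {π : Pos}
    (hπ : Affected S π) : Affected T π := by
  induction hπ with
  | ex t y π ht hy hocc => exact .ex t y π (h ht) hy hocc
  | uni t x π ht hx hocc hbody _ ih => exact .uni t x π (h ht) hx hocc hbody ih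

theorem propEdge.mono {S T : Set Constraint} (h : S ⊆ T) {π1 π2 : Pos}
    (he : propEdge S π1 π2) : propEdge T π1 π2 := by
  obtain ⟨t, ht, x, hx, hxh, hocc, haff, hocc2⟩ := he
  exact ⟨t, h ht, x, hx, hxh, hocc, fun π hπ => (haff π hπ).mono h, hocc2⟩

theorem propSpecialEdge.mono {S T : Set Constraint} (h : S ⊆ T) {π1 π2 : Pos}
    (he : propSpecialEdge S π1 π2) : propSpecialEdge T π1 π2 := by
  obtain ⟨t, ht, x, hx, hxh, hocc, haff, hy⟩ := he
  exact ⟨t, h ht, x, hx, hxh, hocc, fun π hπ => (haff π hπ).mono h, hy⟩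

theorem propAnyEdge.mono {S T : Set Constraint} (h : S ⊆ T) {π1 π2 : Pos}
    (he : propAnyEdge S π1 π2) : propAnyEdge T π1 π2 :=
  he.imp (propEdge.mono h) (propSpecialEdge.mono h)

theorem IsSafe.anti {S T : Set Constraint} (h : S ⊆ T) (hT : IsSafe T) : IsSafe S := by
  rintro ⟨π1, π2, hspecial, hpath⟩
  exact hT ⟨π1, π2, hspecial.mono h,
    Relation.ReflTransGen.mono (fun _ _ => propAnyEdge.mono h) _ _ hpath⟩

theorem subset_of_mem_SCCs {S C : Set Constraint} {E : Constraint → Constraint → Prop}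
    (hC : C ∈ SCCs S E) : C ⊆ S := by
  obtain ⟨α, -, -, rfl⟩ := hC
  exact fun _ hβ => hβ.1

theorem PartMem.subset {S S' : Set Constraint} (h : PartMem S S') : S' ⊆ S := by
  induction h with
  | base => exact subset_rfl
  | step _ _ _ _ _ _ hC _ ih => exact ih.trans (subset_of_mem_SCCs hC)

theorem PartMem.exists_subset_mem_SCCs {S S' : Set Constraint} (h : PartMem S S') :
    ∃ R, IsMinimalRS S R ∧ ∃ C ∈ SCCs S R.E, S' ⊆ C := by
  cases h with
  | base _ R hR hSCCs => exact ⟨R, hR, S, hSCCs ▸ rfl, subset_rfl⟩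
  | step _ R C _ hR _ hC hpart => exact ⟨R, hR, C, hC, hpart.subset⟩

theorem safelyRestricted_implies_inductivelyRestricted_general
    (S : Set Constraint)
    (hsr : SafelyRestricted S) : InductivelyRestricted S := by
  intro S' hS'
  obtain ⟨R, hR, C, hC, hS'C⟩ := hS'.exists_subset_mem_SCCs
  exact (hsr R hR C hC).anti hS'C

/-- Lemma, first bullet. If a set `Σ` of TGDs and EGDs is safely
restricted, then `Σ` is inductively restricted. -/
theorem safelyRestricted_implies_inductivelyRestricted
    (S : Set Constraint) (hfin : S.Finite) (hwf : ∀ α ∈ S, α.wf)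
    (hsr : SafelyRestricted S) : InductivelyRestricted S :=
  safelyRestricted_implies_inductivelyRestricted_general S hsr

end StopChase
end

section
/- There exists a set Σ of TGDs that is inductively restricted but not safely restricted. Concretely, over unary S and binary E, the set Σ' = {α1, α2, α3} with α1 := S(x), E(x,y) → E(y,x), α2 := S(x), E(x,y) → ∃z E(y,z), E(z,x), and α3 := ∃x,y S(x), E(x,y) satisfies part(Σ') = ∅ (hence Σ' is inductively restricted), while the minimal restriction system of Σ' contains the strongly connected component {α1, α2}, which is not safe (hence Σ' is not safely restricted). -/
set_option maxHeartbeats 1000000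

namespace StopChase

/-- The unary relation symbol `S`. -/
def Srel : RelSym := (0, 1)
/-- The binary relation symbol `E`. -/
def Erel : RelSym := (1, 2)

/-- `α1 := S(x), E(x,y) → E(y,x)`. -/
def alpha1 : Constraint :=
  .tgd ⟨[⟨Srel, [Term.var 0]⟩, ⟨Erel, [Term.var 0, Term.var 1]⟩],
        [⟨Erel, [Term.var 1, Term.var 0]⟩]⟩

/-- `α2 := S(x), E(x,y) → ∃z E(y,z), E(z,x)`. -/
def alpha2 : Constraint :=
  .tgd ⟨[⟨Srel, [Term.var 0]⟩, ⟨Erel, [Term.var 0, Term.var 1]⟩],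
        [⟨Erel, [Term.var 1, Term.var 2]⟩, ⟨Erel, [Term.var 2, Term.var 0]⟩]⟩

/-- `α3 := ∃x,y S(x), E(x,y)`. -/
def alpha3 : Constraint :=
  .tgd ⟨[], [⟨Srel, [Term.var 0]⟩, ⟨Erel, [Term.var 0, Term.var 1]⟩]⟩

/-- `Σ' := {α1, α2, α3}`. -/
def SigmaPrime : Set Constraint := {alpha1, alpha2, alpha3}

/-! In the minimal restriction system of `Σ'`, `α3` precedes `α1` and `α2`; as all variables of
`α3` are existential, `f(α1)` and `f(α2)` then contain every position. This gives `α2 ≺ α1`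
(already on null-free instances) and `α1 ≺ α2`, while nothing precedes `α3` (its head has no
universally quantified variable) and neither `α1` nor `α2` precedes itself. So `{α1, α2}` is the
only nontrivial strongly connected component, and it is not safe: `α2` copies `y` from the
affected position `E²` and puts its existential `z` at `E²` again.

Within `{α1, α2}` alone, only the edge `α2 → α1` is forced at first, and `α2` puts nulls only in
`E`-positions. With constants in the `S`-position, the fact `E(y,x)` added by `α1` cannot trigger
`α2` on a tuple containing a null, so `α1 ⊀ α2`; the minimal restriction system of `{α1, α2}` is
acyclic and `part(Σ') = ∅`. -/

lemma prec_mono {P Q : Set Pos} (hPQ : P ⊆ Q) {α β : Constraint} (h : prec P α β) :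
    prec Q α β := by
  obtain ⟨I, J, a, b, hfin, hnulls, rest⟩ := h
  exact ⟨I, J, a, b, hfin, fun F hF π hπ => hPQ (hnulls F hF π hπ), rest⟩

lemma not_prec_of_headUniVars_eq_empty {β : Constraint} (hβ : β.headUniVars = ∅)
    (P : Set Pos) (α : Constraint) : ¬ prec P α β := by
  rintro ⟨-, -, -, -, -, -, -, -, -, -, v, hv, -⟩
  simp [hβ] at hv

lemma nullsOnlyIn_of_forall_not_isNull {I : Set Fact} (P : Set Pos)
    (h : ∀ F ∈ I, ∀ v ∈ F.args, ¬ v.isNull) : nullsOnlyIn I P := by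
  rintro F hF π ⟨-, v, hv, hnull⟩
  exact absurd hnull (h F hF v (List.mem_of_getElem? hv))

lemma IsMinimalRS.E_eq {S : Set Constraint} {R₁ R₂ : RestrSys} (h₁ : IsMinimalRS S R₁)
    (h₂ : IsMinimalRS S R₂) : R₁.E = R₂.E :=
  funext₂ fun a b => propext ⟨(h₁.2 R₂ h₂.1).1 a b, (h₂.2 R₁ h₁.1).1 a b⟩

lemma not_partMem_of_forall_mem_SCCs {S : Set Constraint}
    (h : ∀ R, IsMinimalRS S R → ∀ C ∈ SCCs S R.E, C ≠ S ∧ ∀ S', ¬ PartMem C S')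
    (S' : Set Constraint) : ¬ PartMem S S' := by
  intro hS
  cases hS with
  | base _ R hR hSCC => exact (h R hR S (hSCC ▸ rfl)).1 rfl
  | step _ R C _ hR _ hC hpart => exact (h R hR C hC).2 _ hpart

lemma alpha1_mem_SigmaPrime : alpha1 ∈ SigmaPrime := Or.inl rfl

lemma alpha2_mem_SigmaPrime : alpha2 ∈ SigmaPrime := Or.inr (Or.inl rfl)

lemma alpha3_mem_SigmaPrime : alpha3 ∈ SigmaPrime := Or.inr (Or.inr rfl)

lemma alpha1_ne_alpha2 : alpha1 ≠ alpha2 := by decide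

lemma alpha1_ne_alpha3 : alpha1 ≠ alpha3 := by decide

lemma alpha2_ne_alpha3 : alpha2 ≠ alpha3 := by decide

lemma mem_varsOf_body_S_E (v : ℕ) :
    v ∈ varsOf [(⟨Srel, [Term.var 0]⟩ : Atom), ⟨Erel, [Term.var 0, Term.var 1]⟩] ↔
      v = 0 ∨ v = 1 := by
  simp [varsOf, Atom.vars]

lemma satAt_alpha1_iff (I : Set Fact) (ν : ℕ → Val) :
    alpha1.satAt I ν ↔
      (⟨Srel, [ν 0]⟩ ∈ I → ⟨Erel, [ν 0, ν 1]⟩ ∈ I → ⟨Erel, [ν 1, ν 0]⟩ ∈ I) := by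
  simp only [alpha1, Constraint.satAt, bodyHolds, List.forall_mem_cons, List.not_mem_nil,
    IsEmpty.forall_iff, implies_true, and_true, Atom.inst, Term.eval, List.map,
    mem_varsOf_body_S_E]
  constructor
  · intro h h1 h2
    obtain ⟨ν', hag, hh⟩ := h ⟨h1, h2⟩
    rwa [hag 1 (Or.inr rfl), hag 0 (Or.inl rfl)] at hh
  · rintro h ⟨h1, h2⟩
    exact ⟨ν, fun v _ => rfl, h h1 h2⟩

lemma satAt_alpha2_iff (I : Set Fact) (ν : ℕ → Val) :
    alpha2.satAt I ν ↔
      (⟨Srel, [ν 0]⟩ ∈ I → ⟨Erel, [ν 0, ν 1]⟩ ∈ I →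
        ∃ c, ⟨Erel, [ν 1, c]⟩ ∈ I ∧ ⟨Erel, [c, ν 0]⟩ ∈ I) := by
  simp only [alpha2, Constraint.satAt, bodyHolds, List.forall_mem_cons, List.not_mem_nil,
    IsEmpty.forall_iff, implies_true, and_true, Atom.inst, Term.eval, List.map,
    mem_varsOf_body_S_E]
  constructor
  · intro h h1 h2
    obtain ⟨ν', hag, hh1, hh2⟩ := h ⟨h1, h2⟩
    rw [hag 1 (Or.inr rfl)] at hh1
    rw [hag 0 (Or.inl rfl)] at hh2
    exact ⟨ν' 2, hh1, hh2⟩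
  · rintro h ⟨h1, h2⟩
    obtain ⟨c, hc1, hc2⟩ := h h1 h2
    refine ⟨Function.update ν 2 c, ?_, by simpa, by simpa⟩
    rintro v (rfl | rfl) <;> simp

lemma satAt_alpha3_iff (I : Set Fact) (ν : ℕ → Val) :
    alpha3.satAt I ν ↔ ∃ x y, ⟨Srel, [x]⟩ ∈ I ∧ ⟨Erel, [x, y]⟩ ∈ I := by
  simp only [alpha3, Constraint.satAt, bodyHolds, List.forall_mem_cons, List.not_mem_nil,
    IsEmpty.forall_iff, implies_true, and_true, Atom.inst, Term.eval, List.map]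
  constructor
  · intro h
    obtain ⟨ν', -, hh1, hh2⟩ := h (by simp)
    exact ⟨ν' 0, ν' 1, hh1, hh2⟩
  · rintro ⟨x, y, h1, h2⟩ -
    refine ⟨fun v => if v = 0 then x else y, ?_, by simpa, by simpa⟩
    simp [varsOf]

lemma chaseStep_alpha1_iff {a : ℕ → Val} {I J : Set Fact} :
    alpha1.chaseStep a I J ↔ ¬ alpha1.satAt I a ∧ J = insert ⟨Erel, [a 1, a 0]⟩ I := by
  have hex : TGD.exVars ⟨[⟨Srel, [Term.var 0]⟩, ⟨Erel, [Term.var 0, Term.var 1]⟩],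
      [⟨Erel, [Term.var 1, Term.var 0]⟩]⟩ = ∅ := by
    ext v; simp [TGD.exVars, varsOf, Atom.vars]; omega
  simp only [alpha1, Constraint.chaseStep, hex, Set.mem_empty_iff_false, IsEmpty.forall_iff,
    implies_true, true_and, mem_varsOf_body_S_E, List.mem_singleton, exists_eq_left,
    Atom.inst, List.map, Term.eval, Set.ofPred_eq_eq_singleton, Set.union_singleton,
    and_congr_right_iff]
  refine fun _ => ⟨?_, fun hJ => ⟨a, fun _ _ => rfl, hJ⟩⟩
  rintro ⟨ν', hag, rfl⟩
  rw [hag 0 (Or.inl rfl), hag 1 (Or.inr rfl)]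

lemma chaseStep_alpha2_iff {a : ℕ → Val} {I J : Set Fact} :
    alpha2.chaseStep a I J ↔ ¬ alpha2.satAt I a ∧
      ∃ n, n.isNull ∧ n ∉ adom I ∧ J = I ∪ {⟨Erel, [a 1, n]⟩, ⟨Erel, [n, a 0]⟩} := by
  have hex : TGD.exVars ⟨[⟨Srel, [Term.var 0]⟩, ⟨Erel, [Term.var 0, Term.var 1]⟩],
      [⟨Erel, [Term.var 1, Term.var 2]⟩, ⟨Erel, [Term.var 2, Term.var 0]⟩]⟩ = {2} := by
    ext v; simp [TGD.exVars, varsOf, Atom.vars]; omega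
  have hhead (ν : ℕ → Val) : {F | ∃ A ∈ [(⟨Erel, [Term.var 1, Term.var 2]⟩ : Atom),
      ⟨Erel, [Term.var 2, Term.var 0]⟩], F = A.inst ν} =
      {⟨Erel, [ν 1, ν 2]⟩, ⟨Erel, [ν 2, ν 0]⟩} := by
    ext F; simp [Atom.inst, Term.eval]
  simp only [alpha2, Constraint.chaseStep, hex, hhead, Set.mem_singleton_iff, forall_eq,
    mem_varsOf_body_S_E, and_congr_right_iff]
  refine fun _ => ⟨?_, ?_⟩
  · rintro ⟨ν', hag, hfresh, -, rfl⟩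
    rw [hag 0 (Or.inl rfl), hag 1 (Or.inr rfl)]
    exact ⟨ν' 2, hfresh.1, hfresh.2, rfl⟩
  · rintro ⟨n, hnull, hn, rfl⟩
    refine ⟨Function.update a 2 n, ?_, by simpa using ⟨hnull, hn⟩, by simp⟩
    rintro v (rfl | rfl) <;> simp

lemma chaseStep_alpha3_empty (a : ℕ → Val) :
    alpha3.chaseStep a ∅ {⟨Srel, [.null 0]⟩, ⟨Erel, [.null 0, .null 1]⟩} := by
  refine ⟨by simp [satAt_alpha3_iff], Val.null, by simp [varsOf], ?_, ?_, ?_⟩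
  · intro v _
    exact ⟨trivial, fun ⟨_, hF, _⟩ => hF⟩
  · intro v _ w _ h
    exact Val.null.inj h
  · ext F
    simp [Atom.inst, Term.eval]

lemma headUniVars_alpha1 : alpha1.headUniVars = {0, 1} := by
  ext v; simp [alpha1, Constraint.headUniVars, varsOf, Atom.vars]; omega

lemma headUniVars_alpha2 : alpha2.headUniVars = {0, 1} := by
  ext v; simp [alpha2, Constraint.headUniVars, varsOf, Atom.vars]; omega

lemma headUniVars_alpha3 : alpha3.headUniVars = ∅ := by
  ext v; simp [alpha3, Constraint.headUniVars, varsOf]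

def schemaPos : Set Pos := {(Srel, 0), (Erel, 0), (Erel, 1)}

def ePos : Set Pos := {π | π.1 = Erel}

lemma pos_alpha1 : alpha1.pos = schemaPos := by
  ext ⟨r, i⟩
  simp [Constraint.pos, alpha1, Constraint.bodyAtoms, posOfAtoms, schemaPos,
    Nat.le_one_iff_eq_zero_or_eq_one, and_or_left, eq_comm]

lemma pos_alpha2 : alpha2.pos = schemaPos := pos_alpha1

lemma schemaPos_subset_affCl_alpha3 (P : Set Pos) :
    schemaPos ⊆ affCl ⟨[], [⟨Srel, [Term.var 0]⟩, ⟨Erel, [Term.var 0, Term.var 1]⟩]⟩ P := by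
  rintro π (rfl | rfl | rfl) <;>
    simp [affCl, posOfAtoms, TGD.exVars, varsOf, Atom.vars, occursAt]

lemma affCl_alpha2_subset_ePos (P : Set Pos) :
    affCl ⟨[⟨Srel, [Term.var 0]⟩, ⟨Erel, [Term.var 0, Term.var 1]⟩],
      [⟨Erel, [Term.var 1, Term.var 2]⟩, ⟨Erel, [Term.var 2, Term.var 0]⟩]⟩ P ⊆ ePos := by
  rintro π ⟨⟨A, hA, hrel, -⟩, -⟩
  simp only [List.mem_cons, List.not_mem_nil, or_false] at hA
  rcases hA with rfl | rfl <;> exact hrel.symm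

lemma prec_alpha3_alpha1 : prec ∅ alpha3 alpha1 := by
  refine ⟨∅, _, Val.null, Val.null, Set.finite_empty, fun _ h => h.elim,
    by simp [satAt_alpha3_iff], by simp [satAt_alpha1_iff], chaseStep_alpha3_empty _, ?_,
    0, by simp [headUniVars_alpha1], trivial⟩
  simp [satAt_alpha1_iff]

lemma prec_alpha3_alpha2 : prec ∅ alpha3 alpha2 := by
  refine ⟨∅, _, Val.null, Val.null, Set.finite_empty, fun _ h => h.elim,
    by simp [satAt_alpha3_iff], by simp [satAt_alpha2_iff], chaseStep_alpha3_empty _, ?_,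
    0, by simp [headUniVars_alpha2], trivial⟩
  simp [satAt_alpha2_iff]

lemma prec_alpha2_alpha1 : prec ∅ alpha2 alpha1 := by
  let I : Set Fact := {⟨Srel, [.const 0]⟩, ⟨Srel, [.const 1]⟩, ⟨Erel, [.const 0, .const 1]⟩}
  have hns : ¬ alpha2.satAt I Val.const := by simp [I, satAt_alpha2_iff, Srel, Erel]
  refine ⟨I, _, Val.const, fun v => if v = 0 then .const 1 else .null 0, Set.toFinite _,
    nullsOnlyIn_of_forall_not_isNull _ (by simp [I, Val.isNull]), hns,
    by simp [I, satAt_alpha1_iff, Srel, Erel],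
    chaseStep_alpha2_iff.mpr ⟨hns, .null 0, trivial, by simp [I, adom], rfl⟩,
    by simp [I, satAt_alpha1_iff, Srel, Erel], 1, by simp [headUniVars_alpha1], trivial⟩

lemma prec_alpha1_alpha2 : prec schemaPos alpha1 alpha2 := by
  let I : Set Fact := {⟨Srel, [.null 0]⟩, ⟨Srel, [.null 1]⟩, ⟨Erel, [.null 0, .null 1]⟩}
  have hns : ¬ alpha1.satAt I Val.null := by simp [I, satAt_alpha1_iff, Srel, Erel]
  refine ⟨I, _, Val.null, fun v => if v = 0 then .null 1 else .null 0, Set.toFinite _, ?_,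
    hns, by simp [I, satAt_alpha2_iff, Srel, Erel], chaseStep_alpha1_iff.mpr ⟨hns, rfl⟩,
    by simp [I, satAt_alpha2_iff, Srel, Erel], 1, by simp [headUniVars_alpha2], trivial⟩
  rintro F hF ⟨r, i⟩ ⟨rfl, v, hv, -⟩
  obtain ⟨hi, -⟩ := List.getElem?_eq_some_iff.mp hv
  simp only [I, Set.mem_insert_iff, Set.mem_singleton_iff] at hF
  rcases hF with rfl | rfl | rfl <;> simp [schemaPos] at hi ⊢ <;> omega

lemma not_prec_alpha1_alpha1 (P : Set Pos) : ¬ prec P alpha1 alpha1 := by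
  rintro ⟨I, J, a, b, -, -, -, hsat, hstep, hviol, -⟩
  obtain ⟨hns, rfl⟩ := chaseStep_alpha1_iff.mp hstep
  rw [satAt_alpha1_iff] at hns hsat hviol
  push Not at hns hviol
  obtain ⟨-, hEa, -⟩ := hns
  obtain ⟨hSb, hEb, hback⟩ := hviol
  replace hSb : ⟨Srel, [b 0]⟩ ∈ I := by simpa [Srel, Erel] using hSb
  rcases hEb with hEb | hEb
  · simp only [Fact.mk.injEq, List.cons.injEq, and_true, true_and] at hEb
    rw [hEb.1, hEb.2] at hback
    exact hback (Set.mem_insert_of_mem _ hEa)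
  · exact hback (Set.mem_insert_of_mem _ (hsat hSb hEb))

lemma not_prec_alpha2_alpha2 (P : Set Pos) : ¬ prec P alpha2 alpha2 := by
  rintro ⟨I, J, a, b, -, -, -, hsat, hstep, hviol, -⟩
  obtain ⟨hns, n, -, hfresh, rfl⟩ := chaseStep_alpha2_iff.mp hstep
  rw [satAt_alpha2_iff] at hns hsat hviol
  push Not at hns hviol
  obtain ⟨-, hEa, -⟩ := hns
  obtain ⟨hSb, hEb, hback⟩ := hviol
  replace hSb : ⟨Srel, [b 0]⟩ ∈ I := by simpa [Srel, Erel] using hSb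
  rcases hEb with hEb | hEb | hEb
  · obtain ⟨c, hc1, hc2⟩ := hsat hSb hEb
    exact hback c (Or.inl hc1) (Or.inl hc2)
  · simp only [Fact.mk.injEq, List.cons.injEq, and_true, true_and] at hEb
    rw [hEb.1, hEb.2] at hback
    exact hback (a 0) (Or.inr (Or.inr rfl)) (Or.inl hEa)
  · simp only [Set.mem_singleton_iff, Fact.mk.injEq, List.cons.injEq, and_true,
      true_and] at hEb
    exact hfresh ⟨_, hEb.1 ▸ hSb, by simp⟩

lemma not_prec_self_of_mem_SigmaPrime {α : Constraint} (hα : α ∈ SigmaPrime) (P : Set Pos) :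
    ¬ prec P α α := by
  rcases hα with rfl | rfl | rfl
  · exact not_prec_alpha1_alpha1 P
  · exact not_prec_alpha2_alpha2 P
  · exact not_prec_of_headUniVars_eq_empty headUniVars_alpha3 P _

lemma not_prec_ePos_alpha1_alpha2 : ¬ prec ePos alpha1 alpha2 := by
  rintro ⟨I, J, a, b, -, hnulls, hns, hsat, hstep, hviol, v, hv, hvnull⟩
  obtain ⟨-, rfl⟩ := chaseStep_alpha1_iff.mp hstep
  rw [satAt_alpha1_iff] at hns
  rw [satAt_alpha2_iff] at hsat hviol
  push Not at hns hviol
  obtain ⟨hSa, -, -⟩ := hns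
  obtain ⟨hSb, hEb, hback⟩ := hviol
  replace hSb : ⟨Srel, [b 0]⟩ ∈ I := by simpa [Srel, Erel] using hSb
  have not_isNull_of_S {x : Val} (hx : ⟨Srel, [x]⟩ ∈ I) : ¬ x.isNull := fun hnull =>
    absurd (hnulls _ hx (Srel, 0) ⟨rfl, x, rfl, hnull⟩) (by simp [ePos, Srel, Erel])
  rcases hEb with hEb | hEb
  · simp only [Fact.mk.injEq, List.cons.injEq, and_true, true_and] at hEb
    rw [headUniVars_alpha2] at hv
    rcases hv with rfl | rfl
    · exact not_isNull_of_S hSb hvnull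
    · exact not_isNull_of_S hSa (hEb.2 ▸ hvnull)
  · obtain ⟨c, hc1, hc2⟩ := hsat hSb hEb
    exact hback c (Or.inr hc1) (Or.inr hc2)

def sigmaPrimeRS : RestrSys where
  E α β := α ∈ SigmaPrime ∧ β ∈ SigmaPrime ∧ α ≠ β ∧ β ≠ alpha3
  f α := if α = alpha1 ∨ α = alpha2 then schemaPos else ∅

lemma valid_sigmaPrimeRS : sigmaPrimeRS.valid SigmaPrime := by
  refine ⟨?_, ?_, ?_⟩
  · rintro t β - hβ ⟨-, -, -, hβ3⟩ π ⟨-, hπ⟩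
    have hβ12 : β = alpha1 ∨ β = alpha2 := by
      rcases hβ with h | h | h
      exacts [Or.inl h, Or.inr h, absurd h hβ3]
    simp only [sigmaPrimeRS, if_pos hβ12]
    rcases hβ12 with rfl | rfl
    · rwa [pos_alpha1] at hπ
    · rwa [pos_alpha2] at hπ
  · rintro e β he
    simp [SigmaPrime, alpha1, alpha2, alpha3] at he
  · intro α β hα hβ hprec
    refine ⟨hα, hβ, ?_, ?_⟩
    · rintro rfl
      exact not_prec_self_of_mem_SigmaPrime hα _ hprec
    · rintro rfl
      exact not_prec_of_headUniVars_eq_empty headUniVars_alpha3 _ _ hprec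

lemma sigmaPrimeRS_le_of_valid {R : RestrSys} (hR : R.valid SigmaPrime) :
    sigmaPrimeRS.le R := by
  have e31 : R.E alpha3 alpha1 := hR.2.2 _ _ alpha3_mem_SigmaPrime alpha1_mem_SigmaPrime
    (prec_mono (Set.empty_subset _) prec_alpha3_alpha1)
  have e32 : R.E alpha3 alpha2 := hR.2.2 _ _ alpha3_mem_SigmaPrime alpha2_mem_SigmaPrime
    (prec_mono (Set.empty_subset _) prec_alpha3_alpha2)
  have e21 : R.E alpha2 alpha1 := hR.2.2 _ _ alpha2_mem_SigmaPrime alpha1_mem_SigmaPrime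
    (prec_mono (Set.empty_subset _) prec_alpha2_alpha1)
  have f1 : schemaPos ⊆ R.f alpha1 := fun π hπ =>
    hR.1 _ _ alpha3_mem_SigmaPrime alpha1_mem_SigmaPrime e31
      ⟨schemaPos_subset_affCl_alpha3 _ hπ, pos_alpha1 ▸ hπ⟩
  have f2 : schemaPos ⊆ R.f alpha2 := fun π hπ =>
    hR.1 _ _ alpha3_mem_SigmaPrime alpha2_mem_SigmaPrime e32
      ⟨schemaPos_subset_affCl_alpha3 _ hπ, pos_alpha2 ▸ hπ⟩
  have e12 : R.E alpha1 alpha2 := hR.2.2 _ _ alpha1_mem_SigmaPrime alpha2_mem_SigmaPrime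
    (prec_mono f1 prec_alpha1_alpha2)
  constructor
  · rintro α β ⟨hα, hβ, hne, hβ3⟩
    rcases hα with rfl | rfl | rfl <;> rcases hβ with rfl | rfl | rfl <;>
      first | assumption | exact absurd rfl hne | exact absurd rfl hβ3
  · intro α
    simp only [sigmaPrimeRS]
    split_ifs with h
    · rcases h with rfl | rfl
      exacts [f1, f2]
    · exact Set.empty_subset _

lemma isMinimalRS_sigmaPrimeRS : IsMinimalRS SigmaPrime sigmaPrimeRS :=
  ⟨valid_sigmaPrimeRS, fun _ => sigmaPrimeRS_le_of_valid⟩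

lemma SCCs_sigmaPrimeRS : SCCs SigmaPrime sigmaPrimeRS.E = {{alpha1, alpha2}} := by
  have mem {γ} (hγ : γ = alpha1 ∨ γ = alpha2) : γ ∈ SigmaPrime := by
    rcases hγ with rfl | rfl
    exacts [alpha1_mem_SigmaPrime, alpha2_mem_SigmaPrime]
  have edge {α β} (hα : α = alpha1 ∨ α = alpha2) (hβ : β = alpha1 ∨ β = alpha2)
      (hne : α ≠ β) : edgeOn SigmaPrime sigmaPrimeRS.E α β := by
    refine ⟨mem hα, mem hβ, mem hα, mem hβ, hne, ?_⟩
    rcases hβ with rfl | rfl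
    exacts [alpha1_ne_alpha3, alpha2_ne_alpha3]
  have path {α β} (hα : α = alpha1 ∨ α = alpha2) (hβ : β = alpha1 ∨ β = alpha2) :
      Relation.ReflTransGen (edgeOn SigmaPrime sigmaPrimeRS.E) α β := by
    by_cases hne : α = β
    · exact hne ▸ .refl
    · exact .single (edge hα hβ hne)
  have no_edge_to_alpha3 (α) : ¬ edgeOn SigmaPrime sigmaPrimeRS.E α alpha3 :=
    fun h => h.2.2.2.2.2 rfl
  have scc {α} (hα : α = alpha1 ∨ α = alpha2) :
      sccOf SigmaPrime sigmaPrimeRS.E α = {alpha1, alpha2} := by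
    ext β
    refine ⟨fun ⟨hβ, hαβ, _⟩ => ?_, fun hβ => ⟨mem hβ, path hα hβ, path hβ hα⟩⟩
    rcases hβ with rfl | rfl | rfl
    · exact Or.inl rfl
    · exact Or.inr rfl
    · rcases hαβ.cases_tail with rfl | ⟨γ, -, hγ⟩
      · rcases hα with h | h
        exacts [(alpha1_ne_alpha3 h.symm).elim, (alpha2_ne_alpha3 h.symm).elim]
      · exact absurd hγ (no_edge_to_alpha3 γ)
  ext C
  constructor
  · rintro ⟨α, hα, hcyc, rfl⟩
    rcases hα with rfl | rfl | rfl
    · exact scc (Or.inl rfl)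
    · exact scc (Or.inr rfl)
    · obtain ⟨γ, -, hγ⟩ := Relation.TransGen.tail'_iff.mp hcyc
      exact absurd hγ (no_edge_to_alpha3 γ)
  · rintro rfl
    exact ⟨alpha1, alpha1_mem_SigmaPrime,
      .tail (.single (edge (.inl rfl) (.inr rfl) alpha1_ne_alpha2))
        (edge (.inr rfl) (.inl rfl) alpha1_ne_alpha2.symm),
      (scc (Or.inl rfl)).symm⟩

def alpha12RS : RestrSys where
  E α β := α = alpha2 ∧ β = alpha1
  f α := if α = alpha1 then ePos else ∅

lemma valid_alpha12RS : alpha12RS.valid {alpha1, alpha2} := by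
  refine ⟨?_, ?_, ?_⟩
  · rintro t β - - ⟨hα, rfl⟩ π ⟨hπ, -⟩
    cases hα
    simp only [alpha12RS]
    exact affCl_alpha2_subset_ePos _ hπ
  · rintro e β he
    simp [alpha1, alpha2] at he
  · rintro α β (rfl | rfl) (rfl | rfl) hprec
    · exact absurd hprec (not_prec_alpha1_alpha1 _)
    · simp only [alpha12RS] at hprec
      exact absurd hprec not_prec_ePos_alpha1_alpha2
    · exact ⟨rfl, rfl⟩
    · exact absurd hprec (not_prec_alpha2_alpha2 _)

lemma SCCs_alpha12_eq_empty {R : RestrSys} (hR : IsMinimalRS {alpha1, alpha2} R) :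
    SCCs {alpha1, alpha2} R.E = ∅ := by
  have hE {α β} (h : edgeOn {alpha1, alpha2} R.E α β) : α = alpha2 ∧ β = alpha1 :=
    (hR.2 _ valid_alpha12RS).1 α β h.2.2
  refine Set.eq_empty_of_forall_notMem ?_
  rintro C ⟨α, -, hcyc, -⟩
  obtain ⟨_, hfirst, -⟩ := Relation.TransGen.head'_iff.mp hcyc
  obtain ⟨_, -, hlast⟩ := Relation.TransGen.tail'_iff.mp hcyc
  exact alpha1_ne_alpha2 ((hE hlast).2.symm.trans (hE hfirst).1)

lemma not_isSafe_alpha12 : ¬ IsSafe {alpha1, alpha2} := by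
  have hocc : occursAt [⟨Erel, [Term.var 1, Term.var 2]⟩, ⟨Erel, [Term.var 2, Term.var 0]⟩] 2
      (Erel, 1) := ⟨_, List.mem_cons_self, rfl, rfl⟩
  have hex : 2 ∈ TGD.exVars ⟨[⟨Srel, [Term.var 0]⟩, ⟨Erel, [Term.var 0, Term.var 1]⟩],
      [⟨Erel, [Term.var 1, Term.var 2]⟩, ⟨Erel, [Term.var 2, Term.var 0]⟩]⟩ := by
    simp [TGD.exVars, varsOf, Atom.vars]
  have haff : Affected {alpha1, alpha2} (Erel, 1) := .ex _ 2 _ (Or.inr rfl) hex hocc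
  refine fun hsafe => hsafe ⟨(Erel, 1), (Erel, 1),
    ⟨_, Or.inr rfl, 1, ?_, ?_, ?_, ?_, 2, hex, hocc⟩, .refl⟩
  · simp [TGD.uniVars, varsOf, Atom.vars]
  · simp [varsOf, Atom.vars]
  · exact ⟨⟨Erel, [Term.var 0, Term.var 1]⟩, by simp, rfl, rfl⟩
  · rintro ⟨r, i⟩ ⟨A, hA, rfl, hidx⟩
    simp only [List.mem_cons, List.not_mem_nil, or_false] at hA
    rcases hA with rfl | rfl <;> rcases i with _ | _ | i <;> simp at hidx
    exact haff

lemma alpha12_ne_SigmaPrime : ({alpha1, alpha2} : Set Constraint) ≠ SigmaPrime := by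
  intro h
  rcases h ▸ alpha3_mem_SigmaPrime with h3 | h3
  exacts [alpha1_ne_alpha3 h3.symm, alpha2_ne_alpha3 h3.symm]

/-- Lemma, second bullet. The concrete set `Σ' = {α1,α2,α3}`
satisfies `part(Σ') = ∅` (hence `Σ'` is inductively restricted), while the minimal
restriction system of `Σ'` contains the strongly connected component `{α1,α2}`,
which is not safe (hence `Σ'` is not safely restricted). -/
theorem inductively_restricted_but_not_safely_restricted :
    (∀ S', ¬ PartMem SigmaPrime S') ∧
    InductivelyRestricted SigmaPrime ∧
    (∀ R, IsMinimalRS SigmaPrime R →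
      ({alpha1, alpha2} : Set Constraint) ∈ SCCs SigmaPrime R.E) ∧
    ¬ IsSafe {alpha1, alpha2} ∧
    ¬ SafelyRestricted SigmaPrime := by
  have hSCCs {R} (hR : IsMinimalRS SigmaPrime R) :
      SCCs SigmaPrime R.E = {{alpha1, alpha2}} := by
    rw [hR.E_eq isMinimalRS_sigmaPrimeRS, SCCs_sigmaPrimeRS]
  have not_partMem_alpha12 : ∀ S', ¬ PartMem {alpha1, alpha2} S' :=
    not_partMem_of_forall_mem_SCCs fun R hR C hC => by
      simp [SCCs_alpha12_eq_empty hR] at hC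
  have not_partMem : ∀ S', ¬ PartMem SigmaPrime S' :=
    not_partMem_of_forall_mem_SCCs fun R hR C hC => by
      rw [hSCCs hR, Set.mem_singleton_iff] at hC
      exact hC ▸ ⟨alpha12_ne_SigmaPrime, not_partMem_alpha12⟩
  refine ⟨not_partMem, fun S' h => absurd h (not_partMem S'), fun R hR => by simp [hSCCs hR],
    not_isSafe_alpha12, fun h => not_isSafe_alpha12 ?_⟩
  exact h _ isMinimalRS_sigmaPrimeRS _ (by simp [SCCs_sigmaPrimeRS])

end StopChase
end

section
/- Let S be a chase sequence with prefixes S_i, and suppose the chase step I_i →_{φ_i,ā_i} I_{i+1} applies a TGD φ_i, where b ∈ ā_i is a labeled null and c is a labeled null newly created in this step. Then the depth of any node of the monitor graph G_{S_{i+1}} whose first component is b is strictly smaller than the depth of any node of G_{S_{i+1}} whose first component is c. -/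
set_option maxHeartbeats 1000000

namespace StopChase

/-! The null `b` occurs in the trigger of step `i`, hence already in `I_i`, so each of its
nodes exists before step `i`; the null `c` is fresh, so its node is created by step `i`.
That step adds an edge from every old node to every new one, and depth strictly
increases along every edge. -/

theorem HasDepth.lt_of_mem_edges {E : Set MEdge} {e : MEdge} (he : e ∈ E) {du dv : ℕ}
    (hu : HasDepth E e.src du) (hv : DepthLe E e.tgt dv) : du < dv := by
  obtain ⟨_, _, f, hlt, hpred⟩ := hv
  have hdu : du ≤ f e := not_lt.1 fun h => hu.2 _ h (hpred e he rfl)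
  exact hdu.trans_lt (hlt e he rfl)

theorem Constraint.bodyHolds_of_not_satAt {α : Constraint} {I : Set Fact} {ν : ℕ → Val}
    (h : ¬ α.satAt I ν) : bodyHolds I α.bodyAtoms ν := by
  cases α <;> exact (Classical.not_imp.1 h).1

theorem mem_adom_of_bodyHolds {I : Set Fact} {L : List Atom} {ν : ℕ → Val}
    (hL : bodyHolds I L ν) {v : ℕ} (hv : v ∈ varsOf L) : ν v ∈ adom I := by
  obtain ⟨A, hA, hvA⟩ := hv
  exact ⟨A.inst ν, hL A hA, List.mem_map_of_mem (f := Term.eval ν) hvA⟩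

namespace ChaseData

variable (D : ChaseData)

theorem exists_mem_adom_of_mem_mgV {n : Val} {π : Set Pos} {j : ℕ} (h : (n, π) ∈ D.mgV j) :
    ∃ k < j, n ∈ adom (D.inst (k+1)) := by
  induction j with
  | zero => exact h.elim
  | succ j ih =>
    rcases h with hold | ⟨_, hm, heq⟩
    · obtain ⟨k, hk, hn⟩ := ih hold
      exact ⟨k, hk.trans j.lt_succ_self, hn⟩
    · exact ⟨j, j.lt_succ_self, (Prod.mk.inj heq).1 ▸ hm.2.1⟩

theorem mem_mgV_of_mem_adom {n : Val} {π : Set Pos} {i : ℕ} (h : (n, π) ∈ D.mgV (i+1))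
    (hn : n ∈ adom (D.inst i)) : (n, π) ∈ D.mgV i := by
  rcases h with h | ⟨_, hm, heq⟩
  · exact h
  · exact absurd ((Prod.mk.inj heq).1 ▸ hn) hm.2.2

theorem mem_mgNew_of_forall_not_mem_adom {n : Val} {π : Set Pos} {i : ℕ}
    (h : (n, π) ∈ D.mgV (i+1)) (hn : ∀ j ≤ i, n ∉ adom (D.inst j)) :
    (n, π) ∈ D.mgNew i := by
  refine h.resolve_left fun hold => ?_
  obtain ⟨k, hk, hmem⟩ := D.exists_mem_adom_of_mem_mgV hold
  exact hn (k+1) hk hmem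

theorem edge_mem_mgE {u v : MNode} {i : ℕ} (hu : u ∈ D.mgV i) (hv : v ∈ D.mgNew i) :
    (⟨u, D.cns i, instBodyPos (D.cns i) (D.asg i) u.1, v⟩ : MEdge) ∈ D.mgE (i+1) :=
  Or.inr ⟨hu, hv, rfl, rfl⟩

end ChaseData

theorem old_null_shallower_than_new_null_general (D : ChaseData) (i : ℕ) (t : TGD)
    (hok : ∀ n ≤ i, (D.cns n).chaseStep (D.asg n) (D.inst n) (D.inst (n+1)))
    (hfresh : D.fresh (i+1)) (ht : D.cns i = .tgd t)
    (b : Val) (hbarg : ∃ v ∈ t.uniVars, D.asg i v = b)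
    (c : Val) (hc : c ∈ newNulls (D.inst i) (D.inst (i+1))) :
    ∀ (πb πc : Set Pos) (db dc : ℕ),
      (b, πb) ∈ D.mgV (i+1) → (c, πc) ∈ D.mgV (i+1) →
      HasDepth (D.mgE (i+1)) (b, πb) db → HasDepth (D.mgE (i+1)) (c, πc) dc →
      db < dc := by
  intro πb πc db dc hbv hcv hdb hdc
  have hbody : bodyHolds (D.inst i) t.body (D.asg i) := by
    simpa only [ht, Constraint.bodyAtoms] using
      Constraint.bodyHolds_of_not_satAt (hok i le_rfl).1
  obtain ⟨v, hv, rfl⟩ := hbarg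
  have hbold : (D.asg i v, πb) ∈ D.mgV i :=
    D.mem_mgV_of_mem_adom hbv (mem_adom_of_bodyHolds hbody hv)
  obtain ⟨hcnull, hcadom, hcnot⟩ := hc
  have hcnew : (c, πc) ∈ D.mgNew i :=
    D.mem_mgNew_of_forall_not_mem_adom hcv (hfresh i i.lt_succ_self c hcnull hcadom hcnot)
  exact HasDepth.lt_of_mem_edges (D.edge_mem_mgE hbold hcnew) hdb hdc.1

/-- Proposition 3, fourth bullet. If the chase step
`I_i →_{φ_i,ā_i} I_{i+1}` applies a TGD `φ_i`, `b ∈ ā_i` is a labeled null and `c`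
is a labeled null newly created in this step, then the depth of any node of
`G_{S_{i+1}}` whose first component is `b` is strictly smaller than the depth of
any node of `G_{S_{i+1}}` whose first component is `c`. -/
theorem old_null_shallower_than_new_null (D : ChaseData) (i : ℕ) (t : TGD)
    (hok : ∀ n ≤ i, (D.cns n).chaseStep (D.asg n) (D.inst n) (D.inst (n+1)))
    (hfresh : D.fresh (i+1)) (ht : D.cns i = .tgd t)
    (b : Val) (hb : b.isNull) (hbarg : ∃ v ∈ t.uniVars, D.asg i v = b)
    (c : Val) (hc : c ∈ newNulls (D.inst i) (D.inst (i+1))) :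
    ∀ (πb πc : Set Pos) (db dc : ℕ),
      (b, πb) ∈ D.mgV (i+1) → (c, πc) ∈ D.mgV (i+1) →
      HasDepth (D.mgE (i+1)) (b, πb) db → HasDepth (D.mgE (i+1)) (c, πc) dc →
      db < dc :=
  old_null_shallower_than_new_null_general D i t hok hfresh ht b hbarg c hc

end StopChase
end

section
/- Fix a finite schema and a finite constraint set Σ, and let k ∈ ℕ. There exists p_k ∈ ℕ such that if the monitor graph of a finite chase sequence S contains a directed path of length p_k, then S is k-cyclic. -/
set_option maxHeartbeats 1000000

/-! Every node of the monitor graph is a null created by a TGD step, so its positions are head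
positions of `Σ`, and edge labels are body positions of `Σ`: edge signatures `p_{2,3,4,6}` range
over a finite set `T` determined by `Σ`. An edge always leads from an older to a strictly newer
null, so a path never repeats an edge, and by pigeonhole a path with more than `|T|·k` edges
contains `k` distinct edges with a common signature, in order. -/

theorem List.Nodup.exists_sublist_of_mul_lt_length {α β : Type*} {l : List α} (hl : l.Nodup)
    {f : α → β} {t : Finset β} {n : ℕ} (hf : ∀ a ∈ l, f a ∈ t) (hlen : t.card * n < l.length) :
    ∃ y, ∃ s : List α, s.Sublist l ∧ s.length = n ∧ ∀ a ∈ s, f a = y := by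
  classical
  obtain ⟨y, -, hy⟩ := Finset.exists_lt_card_fiber_of_mul_lt_card_of_maps_to
    (s := l.toFinset) (fun a ha => hf a (List.mem_toFinset.mp ha))
    (by rwa [List.toFinset_card_of_nodup hl])
  have hfiber : (l.filter (f · = y)).length = {a ∈ l.toFinset | f a = y}.card := by
    rw [← List.toFinset_card_of_nodup (hl.filter _), List.toFinset_filter]
    simp only [decide_eq_true_eq]
  refine ⟨y, (l.filter (f · = y)).take n, (List.take_sublist _ _).trans List.filter_sublist,
    by rw [List.length_take]; omega, fun a ha => ?_⟩
  simpa using (List.mem_filter.mp (List.mem_of_mem_take ha)).2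

namespace StopChase

def Constraint.headAtoms : Constraint → List Atom
  | .tgd t => t.head
  | .egd _ => []

theorem posOfAtoms_finite (L : List Atom) : (posOfAtoms L).Finite := by
  refine (L.finite_toSet.biUnion fun A _ =>
    (Set.finite_singleton A.rel).prod (Set.finite_Iio A.args.length)).subset ?_
  rintro π ⟨A, hA, hrel, hlt⟩
  exact Set.mem_biUnion hA ⟨hrel.symm, hlt⟩

theorem instBodyPos_subset_pos (α : Constraint) (ν : ℕ → Val) (v : Val) :
    instBodyPos α ν v ⊆ α.pos := by
  rintro π ⟨A, hA, hrel, hget⟩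
  exact ⟨A, hA, hrel, by simpa using (List.getElem?_eq_some_iff.mp hget).1⟩

theorem eval_mem_adom_of_bodyHolds {I : Set Fact} {L : List Atom} {ν : ℕ → Val} {v : ℕ}
    (hb : bodyHolds I L ν) (hv : v ∈ varsOf L) : ν v ∈ adom I := by
  obtain ⟨A, hA, hvA⟩ := hv
  exact ⟨A.inst ν, hb A hA, List.mem_map.mpr ⟨Term.var v, hvA, rfl⟩⟩

theorem adom_image_substF_subset (a b : Val) (I : Set Fact) :
    adom (Fact.substF a b '' I) ⊆ insert b (adom I) := by
  rintro v ⟨_, ⟨F, hF, rfl⟩, hv⟩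
  obtain ⟨w, hw, rfl⟩ := List.mem_map.mp hv
  by_cases hwa : w = a
  · simp [Val.subst, hwa]
  · exact Or.inr ⟨F, hF, by simpa [Val.subst, hwa] using hw⟩

/-- The value `b` that replaces the null is one of the equated values, which occur in the
violated body and hence already in `I`. -/
theorem newNulls_eq_empty_of_egd_chaseStep {e : EGD} {ν : ℕ → Val} {I J : Set Fact}
    (hwf : e.wf) (hst : (Constraint.egd e).chaseStep ν I J) : newNulls I J = ∅ := by
  obtain ⟨hviol, a, b, -, hab, rfl⟩ := hst
  have hbody : bodyHolds I e.body ν := (Classical.not_imp.mp hviol).1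
  have hb : b ∈ adom I := by
    have : b ∈ ({ν e.lhs, ν e.rhs} : Set Val) := hab ▸ Or.inr rfl
    rcases this with rfl | rfl
    · exact eval_mem_adom_of_bodyHolds hbody hwf.2.2.1
    · exact eval_mem_adom_of_bodyHolds hbody hwf.2.2.2
  refine Set.eq_empty_of_forall_notMem fun n ⟨_, hnJ, hnI⟩ => hnI ?_
  rcases adom_image_substF_subset a b I hnJ with rfl | h
  exacts [hb, h]

theorem posOfVal_subset_head_of_tgd_chaseStep {t : TGD} {ν : ℕ → Val} {I J : Set Fact}
    {n : Val} (hst : (Constraint.tgd t).chaseStep ν I J) (hn : n ∈ newNulls I J) :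
    posOfVal J n ⊆ posOfAtoms t.head := by
  obtain ⟨-, ν', -, -, -, rfl⟩ := hst
  rintro π ⟨F, hF | ⟨A, hA, rfl⟩, hrel, hget⟩
  · exact absurd ⟨F, hF, List.mem_of_getElem? hget⟩ hn.2.2
  · exact ⟨A, hA, hrel, by simpa [Atom.inst] using (List.getElem?_eq_some_iff.mp hget).1⟩

def constraintPositions (S : Set Constraint) : Set Pos :=
  ⋃ α ∈ S, α.pos ∪ posOfAtoms α.headAtoms

def sigRange (S : Set Constraint) : Set (Set Pos × Constraint × Set Pos × Set Pos) :=
  𝒫 constraintPositions S ×ˢ S ×ˢ 𝒫 constraintPositions S ×ˢ 𝒫 constraintPositions S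

theorem sigRange_finite {S : Set Constraint} (hS : S.Finite) : (sigRange S).Finite := by
  have hP : (𝒫 constraintPositions S).Finite :=
    (hS.biUnion fun α _ => (posOfAtoms_finite _).union (posOfAtoms_finite _)).powerset
  exact hP.prod (hS.prod (hP.prod hP))

namespace ChaseData

variable {D : ChaseData} {S : Set Constraint} {r i j : ℕ}

def mgNewE (D : ChaseData) (i : ℕ) : Set MEdge :=
  {e | e.src ∈ D.mgV i ∧ e.tgt ∈ D.mgNew i ∧ e.cns = D.cns i ∧
       e.lbl = instBodyPos (D.cns i) (D.asg i) e.src.1}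

theorem mem_mgV {v : MNode} : v ∈ D.mgV r ↔ ∃ i < r, v ∈ D.mgNew i := by
  induction r with
  | zero => simp [mgV]
  | succ r ih =>
    show v ∈ D.mgV r ∪ D.mgNew r ↔ _
    simp only [Set.mem_union, ih, Nat.lt_succ_iff_lt_or_eq, or_and_right, exists_or,
      exists_eq_left]

theorem mem_mgE {e : MEdge} : e ∈ D.mgE r ↔ ∃ i < r, e ∈ D.mgNewE i := by
  induction r with
  | zero => simp [mgE]
  | succ r ih =>
    show e ∈ D.mgE r ∪ D.mgNewE r ↔ _
    simp only [Set.mem_union, ih, Nat.lt_succ_iff_lt_or_eq, or_and_right, exists_or,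
      exists_eq_left]

theorem fst_mem_newNulls_of_mem_mgNew {p : MNode} (hp : p ∈ D.mgNew i) :
    p.1 ∈ newNulls (D.inst i) (D.inst (i+1)) := by
  obtain ⟨n, hn, rfl⟩ := hp
  exact hn

theorem eq_of_mem_newNulls (hf : D.fresh r) (hi : i < r) (hj : j < r) {n : Val}
    (hni : n ∈ newNulls (D.inst i) (D.inst (i+1)))
    (hnj : n ∈ newNulls (D.inst j) (D.inst (j+1))) : i = j := by
  rcases lt_trichotomy i j with h | h | h
  · exact absurd hni.2.1 (hf j hj n hnj.1 hnj.2.1 hnj.2.2 (i+1) h)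
  · exact h
  · exact absurd hnj.2.1 (hf i hi n hni.1 hni.2.1 hni.2.2 (j+1) h)

theorem lt_of_mem_mgNewE_of_tgt_eq_src (hf : D.fresh r) (hi : i < r) (hj : j < r)
    {e e' : MEdge} (he : e ∈ D.mgNewE i) (he' : e' ∈ D.mgNewE j) (h : e.tgt = e'.src) :
    i < j := by
  obtain ⟨i', hi', hsrc⟩ := mem_mgV.mp he'.1
  have := eq_of_mem_newNulls hf hi (hi'.trans hj)
    (h ▸ fst_mem_newNulls_of_mem_mgNew he.2.1) (fst_mem_newNulls_of_mem_mgNew hsrc)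
  omega

theorem nodup_of_isPath (hf : D.fresh r) {l : List MEdge} (hl : IsPath (D.mgE r) l) :
    l.Nodup := by
  choose! s hs using fun e he => mem_mgE.mp (hl.1 e he)
  have hchain : (l.map s).IsChain (· < ·) :=
    (List.isChain_map s).mpr <| hl.2.imp_of_mem_imp fun a b ha hb hab =>
      lt_of_mem_mgNewE_of_tgt_eq_src hf (hs a ha).1 (hs b hb).1 (hs a ha).2 (hs b hb).2 hab
  exact hchain.pairwise.nodup.of_map s

theorem snd_subset_of_mem_mgNew (hok : D.okUpTo S r) (hwf : ∀ α ∈ S, α.wf) (hi : i < r)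
    {p : MNode} (hp : p ∈ D.mgNew i) : p.2 ⊆ constraintPositions S := by
  obtain ⟨hmem, hstep⟩ := hok i hi
  obtain ⟨n, hn, rfl⟩ := hp
  rcases hcns : D.cns i with t | e <;> rw [hcns] at hstep hmem
  · exact (posOfVal_subset_head_of_tgd_chaseStep hstep hn).trans
      fun π hπ => Set.mem_biUnion hmem (Or.inr hπ)
  · rw [newNulls_eq_empty_of_egd_chaseStep (hwf _ hmem) hstep] at hn
    exact absurd hn (Set.notMem_empty n)

theorem sig_mem_sigRange (hok : D.okUpTo S r) (hwf : ∀ α ∈ S, α.wf) {e : MEdge}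
    (he : e ∈ D.mgE r) : e.sig ∈ sigRange S := by
  obtain ⟨i, hi, hsrc, htgt, hcns, hlbl⟩ := mem_mgE.mp he
  obtain ⟨i', hi', hsrc⟩ := mem_mgV.mp hsrc
  have hα : D.cns i ∈ S := (hok i hi).1
  refine ⟨snd_subset_of_mem_mgNew hok hwf (hi'.trans hi) hsrc, show e.cns ∈ S from hcns ▸ hα, ?_,
    snd_subset_of_mem_mgNew hok hwf hi htgt⟩
  show e.lbl ⊆ constraintPositions S
  rw [hlbl]
  exact (instBodyPos_subset_pos _ _ _).trans fun π hπ => Set.mem_biUnion hα (Or.inl hπ)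

end ChaseData

theorem kCyclic_of_isPath {E : Set MEdge} {l : List MEdge} {k : ℕ}
    {t : Finset (Set Pos × Constraint × Set Pos × Set Pos)} (hl : IsPath E l) (hnd : l.Nodup)
    (hsig : ∀ e ∈ l, e.sig ∈ t) (hlen : t.card * k < l.length) : kCyclic E k := by
  obtain ⟨y, es, hsub, hk, hy⟩ := hnd.exists_sublist_of_mul_lt_length hsig hlen
  refine ⟨l, es, hl, hsub, hk, hnd.sublist hsub, ?_⟩
  exact (List.pairwise_of_forall_mem_list fun a ha b hb => (hy a ha).trans (hy b hb).symm).isChain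

/-- Proposition 5. For a fixed finite constraint set `Σ` and
`k ∈ ℕ` there exists `p_k ∈ ℕ` such that if the monitor graph of a finite chase
sequence contains a directed path of length `p_k`, then the sequence is `k`-cyclic. -/
theorem long_path_implies_kCyclic (Sg : Set Constraint) (hfin : Sg.Finite)
    (hwf : ∀ α ∈ Sg, α.wf) (k : ℕ) :
    ∃ p : ℕ, ∀ (D : ChaseData) (r : ℕ), (D.inst 0).Finite →
      D.okUpTo Sg r → D.fresh r →
      (∃ l : List MEdge, IsPath (D.mgE r) l ∧ l.length = p) →
      kCyclic (D.mgE r) k := by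
  let T := (sigRange_finite hfin).toFinset
  refine ⟨T.card * k + 1, fun D r _ hok hfr ⟨l, hl, hlen⟩ => ?_⟩
  exact kCyclic_of_isPath (t := T) hl (D.nodup_of_isPath hfr hl)
    (fun e he => (Set.Finite.mem_toFinset _).mpr (D.sig_mem_sigRange hok hwf (hl.1 e he)))
    (by omega)

end StopChase
end
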